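/- arXiv:1108.0096 — 6 statements merged into one kernel-verified Lean document; each statement's English description precedes it below -/
import Mathlib

section
/- For positive integers a, n, x, y, the equation a/n = 1/x + 1/y holds if and only if (ax - n)(ay - n) = n^2. Consequently, the number of ordered pairs (x,y) of positive integers with a/n = 1/x + 1/y equals the number of ordered pairs (u,v) of positive integers with uv = n^2 and u ≡ -n (mod a) and v ≡ -n (mod a). -/
/-!
Clearing denominators turns `a/n = 1/x + 1/y` into `a x y = n (x + y)`, and multiplying by `a`
completes this to `(a x - n)(a y - n) = n²`. Both factors exceed `-n`, which forces them to be
positive, so `x ↦ a x - n` (with inverse `u ↦ (u + n) / a`) matches the solutions with the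
factorisations of `n²` into positive factors that are `≡ -n (mod a)`.
-/

open Set

theorem div_eq_one_div_add_one_div_iff {K : Type*} [Field K] [LinearOrder K]
    [IsStrictOrderedRing K] {a n x y : K} (ha : 0 < a) (hx : 0 < x) (hy : 0 < y) :
    a / n = 1 / x + 1 / y ↔ a * (x * y) = n * (x + y) := by
  rcases eq_or_ne n 0 with rfl | hn
  · rw [div_zero, zero_mul]
    exact iff_of_false (by positivity : 1 / x + 1 / y ≠ 0).symm (by positivity)
  · rw [one_div_add_one_div hx.ne' hy.ne', div_eq_div_iff hn (by positivity), mul_comm n]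

theorem mul_sub_mul_sub_eq_sq_iff {R : Type*} [CommRing R] [IsDomain R] {a n x y : R}
    (ha : a ≠ 0) :
    (a * x - n) * (a * y - n) = n ^ 2 ↔ a * (x * y) = n * (x + y) := by
  have key : (a * x - n) * (a * y - n) - n ^ 2 = a * (a * (x * y) - n * (x + y)) := by ring
  rw [← sub_eq_zero, key, mul_eq_zero, sub_eq_zero, or_iff_right ha]

theorem pos_of_mul_eq_sq {R : Type*} [CommRing R] [LinearOrder R] [IsStrictOrderedRing R]
    {u v n : R} (hu : -n < u) (hv : -n < v) (h : u * v = n ^ 2) : 0 < u := by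
  by_contra! hu0
  nlinarith

theorem Int.natCast_modEq_neg_iff_dvd_add {a n u : ℕ} :
    (u : ℤ) ≡ -(n : ℤ) [ZMOD a] ↔ a ∣ u + n := by
  rw [Int.modEq_iff_dvd, show -(n : ℤ) - u = -((u + n : ℕ) : ℤ) by push_cast; ring, dvd_neg,
    Int.natCast_dvd_natCast]

section Counting

variable {a n : ℕ}

theorem div_eq_one_div_add_one_div_iff_mul_sub_mul_sub_eq_sq {x y : ℕ} (ha : 0 < a)
    (hx : 0 < x) (hy : 0 < y) :
    (a : ℚ) / n = 1 / x + 1 / y ↔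
      ((a : ℤ) * x - n) * ((a : ℤ) * y - n) = (n : ℤ) ^ 2 := by
  rw [div_eq_one_div_add_one_div_iff (by positivity) (by positivity) (by positivity),
    mul_sub_mul_sub_eq_sq_iff (by positivity)]
  exact_mod_cast Iff.rfl

def unitFractionPairs (a n : ℕ) : Set (ℕ × ℕ) :=
  {p | 0 < p.1 ∧ 0 < p.2 ∧ (a : ℚ) / n = 1 / p.1 + 1 / p.2}

def factorPairsModEqNeg (a n : ℕ) : Set (ℕ × ℕ) :=
  {p | 0 < p.1 ∧ 0 < p.2 ∧ p.1 * p.2 = n ^ 2 ∧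
    (p.1 : ℤ) ≡ -(n : ℤ) [ZMOD a] ∧ (p.2 : ℤ) ≡ -(n : ℤ) [ZMOD a]}

theorem lt_mul_of_mem_unitFractionPairs (ha : 0 < a) {p : ℕ × ℕ}
    (hp : p ∈ unitFractionPairs a n) :
    n < a * p.1 ∧ n < a * p.2 := by
  obtain ⟨hx, hy, h⟩ := hp
  have hE := (div_eq_one_div_add_one_div_iff_mul_sub_mul_sub_eq_sq ha hx hy).mp h
  have hx' : -(n : ℤ) < a * p.1 - n := by linarith [show (0 : ℤ) < a * p.1 by positivity]
  have hy' : -(n : ℤ) < a * p.2 - n := by linarith [show (0 : ℤ) < a * p.2 by positivity]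
  have h1 := pos_of_mul_eq_sq hx' hy' hE
  have h2 := pos_of_mul_eq_sq hy' hx' (by rwa [mul_comm])
  constructor <;> omega

theorem mapsTo_unitFractionPairs (ha : 0 < a) :
    MapsTo (fun p : ℕ × ℕ => (a * p.1 - n, a * p.2 - n))
      (unitFractionPairs a n) (factorPairsModEqNeg a n) := by
  rintro ⟨x, y⟩ hp
  obtain ⟨hx, hy⟩ := lt_mul_of_mem_unitFractionPairs ha hp
  have hE := (div_eq_one_div_add_one_div_iff_mul_sub_mul_sub_eq_sq ha hp.1 hp.2.1).mp hp.2.2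
  dsimp only at hx hy hE
  refine ⟨Nat.sub_pos_of_lt hx, Nat.sub_pos_of_lt hy, by zify [hx.le, hy.le]; exact hE, ?_, ?_⟩
  · rw [Int.natCast_modEq_neg_iff_dvd_add, Nat.sub_add_cancel hx.le]
    exact dvd_mul_right a x
  · rw [Int.natCast_modEq_neg_iff_dvd_add, Nat.sub_add_cancel hy.le]
    exact dvd_mul_right a y

theorem mapsTo_factorPairsModEqNeg (ha : 0 < a) :
    MapsTo (fun q : ℕ × ℕ => ((q.1 + n) / a, (q.2 + n) / a))
      (factorPairsModEqNeg a n) (unitFractionPairs a n) := by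
  rintro ⟨u, v⟩ ⟨hu, hv, huv, hcu, hcv⟩
  dsimp only at hu hv huv hcu hcv
  rw [Int.natCast_modEq_neg_iff_dvd_add] at hcu hcv
  have hx : 0 < (u + n) / a := Nat.div_pos (Nat.le_of_dvd (by omega) hcu) ha
  have hy : 0 < (v + n) / a := Nat.div_pos (Nat.le_of_dvd (by omega) hcv) ha
  have cancel {w : ℕ} (hw : a ∣ w + n) : (a : ℤ) * ((w + n) / a : ℕ) - n = w := by
    rw [← Nat.cast_mul, Nat.mul_div_cancel' hw]
    push_cast
    ring
  refine ⟨hx, hy, (div_eq_one_div_add_one_div_iff_mul_sub_mul_sub_eq_sq ha hx hy).mpr ?_⟩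
  rw [cancel hcu, cancel hcv]
  exact_mod_cast huv

theorem invOn_unitFractionPairs (ha : 0 < a) :
    InvOn (fun q : ℕ × ℕ => ((q.1 + n) / a, (q.2 + n) / a))
      (fun p : ℕ × ℕ => (a * p.1 - n, a * p.2 - n))
      (unitFractionPairs a n) (factorPairsModEqNeg a n) := by
  constructor
  · rintro ⟨x, y⟩ hp
    obtain ⟨hx, hy⟩ := lt_mul_of_mem_unitFractionPairs ha hp
    dsimp only at hx hy ⊢
    rw [Nat.sub_add_cancel hx.le, Nat.sub_add_cancel hy.le, Nat.mul_div_cancel_left _ ha,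
      Nat.mul_div_cancel_left _ ha]
  · rintro ⟨u, v⟩ ⟨-, -, -, hcu, hcv⟩
    dsimp only at hcu hcv ⊢
    rw [Int.natCast_modEq_neg_iff_dvd_add] at hcu hcv
    rw [Nat.mul_div_cancel' hcu, Nat.mul_div_cancel' hcv, Nat.add_sub_cancel, Nat.add_sub_cancel]

end Counting

theorem binary_egyptian_fraction_transform_general (a n : ℕ) (ha : 0 < a) :
    (∀ x y : ℕ, 0 < x → 0 < y →
      ((a : ℚ) / n = 1 / x + 1 / y ↔
        ((a : ℤ) * x - n) * ((a : ℤ) * y - n) = (n : ℤ) ^ 2)) ∧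
    Nat.card {p : ℕ × ℕ | 0 < p.1 ∧ 0 < p.2 ∧ (a : ℚ) / n = 1 / p.1 + 1 / p.2} =
      Nat.card {p : ℕ × ℕ | 0 < p.1 ∧ 0 < p.2 ∧ p.1 * p.2 = n ^ 2 ∧
        (p.1 : ℤ) ≡ -(n : ℤ) [ZMOD a] ∧ (p.2 : ℤ) ≡ -(n : ℤ) [ZMOD a]} :=
  ⟨fun _ _ hx hy => div_eq_one_div_add_one_div_iff_mul_sub_mul_sub_eq_sq ha hx hy,
    Nat.card_congr ((invOn_unitFractionPairs ha).bijOn (mapsTo_unitFractionPairs ha)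
      (mapsTo_factorPairsModEqNeg ha)).equiv⟩

/-- For positive integers `a, n, x, y`, the equation `a/n = 1/x + 1/y` holds iff
`(ax - n)(ay - n) = n²`; consequently the number of solutions `(x, y)` equals the number
of pairs `(u, v)` with `uv = n²`, `u ≡ -n (mod a)` and `v ≡ -n (mod a)`. -/
theorem binary_egyptian_fraction_transform (a n : ℕ) (ha : 0 < a) (hn : 0 < n) :
    (∀ x y : ℕ, 0 < x → 0 < y →
      ((a : ℚ) / n = 1 / x + 1 / y ↔
        ((a : ℤ) * x - n) * ((a : ℤ) * y - n) = (n : ℤ) ^ 2)) ∧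
    Nat.card {p : ℕ × ℕ | 0 < p.1 ∧ 0 < p.2 ∧ (a : ℚ) / n = 1 / p.1 + 1 / p.2} =
      Nat.card {p : ℕ × ℕ | 0 < p.1 ∧ 0 < p.2 ∧ p.1 * p.2 = n ^ 2 ∧
        (p.1 : ℤ) ≡ -(n : ℤ) [ZMOD a] ∧ (p.2 : ℤ) ≡ -(n : ℤ) [ZMOD a]} :=
  binary_egyptian_fraction_transform_general a n ha
end

section
/- For a positive integer n, every divisor u of n² can be written uniquely as u = n₁·n₂² where n₁ is squarefree, n₁·n₂ divides n, i.e., the pairs (u, n) with u | n² correspond bijectively to triples (n₁, n₂, n₃) with n = n₁n₂n₃, n₁ squarefree, and u = n₁n₂². -/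
/-
Every natural number `u ≠ 0` factors as `u = a * b ^ 2` with `a` squarefree, and since the
exponents of `a` are at most one, `a` and `b` are read off the factorization of `u`: `a` collects
the primes of odd exponent. If `u ∣ n ^ 2` then, prime by prime, `a_p + 2 b_p ≤ 2 n_p` with
`a_p ≤ 1` forces `a_p + b_p ≤ n_p`, i.e. `a * b ∣ n`, and `n₃ = n / (a * b)` is then forced.
-/

namespace Nat

theorem factorization_squarefree_mul_sq_apply {a b : ℕ} (ha : Squarefree a) (hb : b ≠ 0)
    (p : ℕ) : (a * b ^ 2).factorization p = a.factorization p + 2 * b.factorization p := by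
  rw [factorization_mul ha.ne_zero (pow_ne_zero 2 hb), factorization_pow]
  rfl

theorem squarefree_mul_sq_injective {a b a' b' : ℕ} (ha : Squarefree a) (ha' : Squarefree a')
    (hb : b ≠ 0) (h : a * b ^ 2 = a' * b' ^ 2) : a = a' ∧ b = b' := by
  have hb' : b' ≠ 0 := by
    rintro rfl
    simp [ha.ne_zero, hb] at h
  have hfac (p : ℕ) : a.factorization p + 2 * b.factorization p
      = a'.factorization p + 2 * b'.factorization p := by
    rw [← factorization_squarefree_mul_sq_apply ha hb,
      ← factorization_squarefree_mul_sq_apply ha' hb', h]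
  refine ⟨eq_of_factorization_eq ha.ne_zero ha'.ne_zero fun p => ?_,
    eq_of_factorization_eq hb hb' fun p => ?_⟩ <;>
  · have := hfac p
    have := ha.natFactorization_le_one p
    have := ha'.natFactorization_le_one p
    omega

theorem mul_dvd_of_squarefree_of_mul_sq_dvd_sq {a b n : ℕ} (ha : Squarefree a)
    (h : a * b ^ 2 ∣ n ^ 2) : a * b ∣ n := by
  rcases eq_or_ne n 0 with rfl | hn
  · exact dvd_zero _
  have hb : b ≠ 0 := by
    rintro rfl
    simp [hn] at h
  rw [← factorization_le_iff_dvd (mul_ne_zero ha.ne_zero hb) hn]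
  intro p
  have hp := (factorization_le_iff_dvd (mul_ne_zero ha.ne_zero (pow_ne_zero 2 hb))
    (pow_ne_zero 2 hn)).2 h p
  rw [factorization_squarefree_mul_sq_apply ha hb, factorization_pow] at hp
  rw [factorization_mul ha.ne_zero hb]
  have := ha.natFactorization_le_one p
  simp only [Finsupp.add_apply, Finsupp.smul_apply, smul_eq_mul] at hp ⊢
  omega

end Nat

theorem divisors_of_square_bijection_general (n : ℕ) :
    ∀ u ∈ (n ^ 2).divisors,
      ∃! t : ℕ × ℕ × ℕ, t.1 * t.2.1 * t.2.2 = n ∧ Squarefree t.1 ∧ u = t.1 * t.2.1 ^ 2 := by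
  intro u hu
  obtain ⟨a, b, rfl, ha⟩ := Nat.sq_mul_squarefree u
  rw [mul_comm] at hu ⊢
  have hb : b ≠ 0 := by
    rintro rfl
    simp at hu
  obtain ⟨c, hc⟩ := Nat.mul_dvd_of_squarefree_of_mul_sq_dvd_sq ha (Nat.dvd_of_mem_divisors hu)
  refine ⟨(a, b, c), ⟨hc.symm, ha, rfl⟩, ?_⟩
  rintro ⟨a', b', c'⟩ ⟨hn', ha', hu'⟩
  obtain ⟨rfl, rfl⟩ := Nat.squarefree_mul_sq_injective ha ha' hb hu'
  obtain rfl : c' = c := mul_left_cancel₀ (mul_ne_zero ha.ne_zero hb) (hn'.trans hc)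
  rfl

/-- Every divisor `u` of `n²` corresponds uniquely to a triple `(n₁, n₂, n₃)` with
`n = n₁n₂n₃`, `n₁` squarefree and `u = n₁n₂²`. -/
theorem divisors_of_square_bijection (n : ℕ) (hn : 0 < n) :
    ∀ u ∈ (n ^ 2).divisors,
      ∃! t : ℕ × ℕ × ℕ, t.1 * t.2.1 * t.2.2 = n ∧ Squarefree t.1 ∧ u = t.1 * t.2.1 ^ 2 :=
  divisors_of_square_bijection_general n
end

section
/- For real part of s greater than 1 and χ a Dirichlet character mod a, the Dirichlet series Σ_{n≥1} (conj(χ)(n)/n^s) Σ_{u | n²} χ(u) equals L(s,χ₀)·L(s,χ)·L(s,conj(χ)) / L(2s,χ₀), where χ₀ is the principal character mod a. -/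
/-!
Both sides are Dirichlet series of multiplicative functions, so it suffices to compare their Bell
series `∑ₑ f(pᵉ) Tᵉ` prime by prime. With `x = χ(p)`, `y = conj χ(p)` and `c = χ₀(p)`, the left
side has Bell series `∑ₑ yᵉ (1 + x + ⋯ + x²ᵉ) Tᵉ`, the product `χ₀ * χ * χ̄` has
`1 / ((1 - cT)(1 - xT)(1 - yT))`, and `1 / L(2s, χ₀)` is the Dirichlet series of the function
supported on squares with `n² ↦ χ₀(n) μ(n)`, whose Bell series is `1 - cT²`. For `p ∤ a` we have
`c = 1` and `xy = 1`, and multiplying the left side by `1 - xT` telescopes to `(1 + T) / (1 - yT)`,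
which is the right side since `(1 - T²) / (1 - T) = 1 + T`. For `p ∣ a` every Bell series is `1`.
-/

open PowerSeries Finset
open scoped ArithmeticFunction.zeta ArithmeticFunction.Moebius LSeries.notation

theorem Nat.Coprime.exists_sq_left_of_mul_eq_sq {m n k : ℕ} (h : m.Coprime n)
    (hk : m * n = k ^ 2) : ∃ r, r ^ 2 = m := by
  obtain ⟨r, hr⟩ := exists_eq_pow_of_mul_eq_pow (Nat.isUnit_iff.mpr h) hk
  exact ⟨r, hr.symm⟩

theorem Nat.Prime.sq_ne_pow {p e : ℕ} (hp : p.Prime) (he : ¬ 2 ∣ e) (r : ℕ) : r ^ 2 ≠ p ^ e := by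
  intro h
  have hval := congrArg (·.factorization p) h
  simp only [Nat.factorization_pow, Finsupp.coe_smul, Pi.smul_apply, smul_eq_mul,
    hp.factorization, Finsupp.single_eq_same, mul_one] at hval
  exact he ⟨_, hval.symm⟩

namespace PowerSeries

variable {R : Type*} [CommRing R]

theorem rescale_mk_one_mul_one_sub (a : R) : rescale a (mk 1) * (1 - C a * X) = 1 := by
  simpa [rescale_X] using congrArg (rescale a) (mk_one_mul_one_sub_eq_one (S := R))

theorem one_sub_C_mul_X_mul_rescale_mk_sum_range {x y : R} (hxy : x * y = 1) :
    (1 - C x * X) * rescale y (mk fun e => ∑ i ∈ range (2 * e + 1), x ^ i) =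
      (1 + X) * rescale y (mk 1) := by
  ext (_ | e)
  · simp [coeff_mul]
  simp only [sub_mul, add_mul, one_mul, mul_assoc, map_sub, map_add, coeff_C_mul,
    coeff_succ_X_mul, coeff_rescale, coeff_mk, Pi.one_apply]
  set S := ∑ i ∈ range (2 * e + 1), x ^ i
  have hS : ∑ i ∈ range (2 * (e + 1) + 1), x ^ i = x ^ 2 * S + x + 1 := by
    rw [show 2 * (e + 1) + 1 = 2 * e + 1 + 1 + 1 by ring, sum_range_succ', sum_range_succ',
      mul_sum, zero_add, pow_one, pow_zero]
    exact congrArg (· + x + 1) (sum_congr rfl fun i _ => by ring)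
  rw [hS]
  linear_combination (y ^ e * x * S + y ^ e) * hxy

theorem rescale_mk_sum_range_eq {x y : R} (hxy : x * y = 1) :
    rescale y (mk fun e => ∑ i ∈ range (2 * e + 1), x ^ i) =
      mk 1 * rescale x (mk 1) * rescale y (mk 1) * (1 - X ^ 2) := by
  have h1 := mk_one_mul_one_sub_eq_one (S := R)
  have hx := rescale_mk_one_mul_one_sub x
  have hxy' := one_sub_C_mul_X_mul_rescale_mk_sum_range hxy
  linear_combination (-(rescale y (mk fun e => ∑ i ∈ range (2 * e + 1), x ^ i))) * hx +
    rescale x (mk 1) * hxy' - rescale x (mk 1) * rescale y (mk 1) * (1 + X) * h1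

end PowerSeries

namespace ArithmeticFunction

variable {R : Type*}

section BellSeries

noncomputable def bellSeries [Semiring R] (p : ℕ) (f : ArithmeticFunction R) : PowerSeries R :=
  mk fun e => f (p ^ e)

@[simp]
theorem coeff_bellSeries [Semiring R] (p e : ℕ) (f : ArithmeticFunction R) :
    coeff e (bellSeries p f) = f (p ^ e) :=
  coeff_mk _ _

theorem mul_apply_prime_pow [Semiring R] (f g : ArithmeticFunction R) {p : ℕ} (hp : p.Prime)
    (e : ℕ) : (f * g) (p ^ e) = ∑ ij ∈ antidiagonal e, f (p ^ ij.1) * g (p ^ ij.2) := by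
  rw [mul_apply, Nat.sum_divisorsAntidiagonal (fun x y => f x * g y),
    Nat.sum_divisors_prime_pow hp,
    Nat.sum_antidiagonal_eq_sum_range_succ (fun i j => f (p ^ i) * g (p ^ j))]
  refine sum_congr rfl fun i hi => ?_
  rw [Nat.pow_div (mem_range_succ_iff.mp hi) hp.pos]

theorem bellSeries_mul [CommSemiring R] (f g : ArithmeticFunction R) {p : ℕ} (hp : p.Prime) :
    bellSeries p (f * g) = bellSeries p f * bellSeries p g := by
  ext e
  rw [coeff_mul, coeff_bellSeries, mul_apply_prime_pow f g hp]
  simp only [coeff_bellSeries]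

theorem IsMultiplicative.eq_of_bellSeries_eq [CommSemiring R] {f g : ArithmeticFunction R}
    (hf : f.IsMultiplicative) (hg : g.IsMultiplicative)
    (h : ∀ p, p.Prime → bellSeries p f = bellSeries p g) : f = g :=
  (eq_iff_eq_on_prime_powers f hf g hg).mpr fun p e hp => by
    simpa using congrArg (coeff e) (h p hp)

theorem bellSeries_moebius [CommRing R] {p : ℕ} (hp : p.Prime) :
    bellSeries p (μ : ArithmeticFunction R) = 1 - X := by
  ext (_ | _ | e)
  · simp
  · simp [moebius_apply_prime hp]
  · simp [moebius_apply_prime_pow hp, coeff_X]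

end BellSeries

section Squares

def compSq [Zero R] (f : ArithmeticFunction R) : ArithmeticFunction R :=
  ⟨fun n => f (n ^ 2), by simp⟩

@[simp]
theorem compSq_apply [Zero R] (f : ArithmeticFunction R) (n : ℕ) : compSq f n = f (n ^ 2) :=
  rfl

theorem IsMultiplicative.compSq [MonoidWithZero R] {f : ArithmeticFunction R}
    (hf : f.IsMultiplicative) : (compSq f).IsMultiplicative :=
  ⟨by simpa using hf.map_one, fun {m n} hmn => by
    simpa [mul_pow] using hf.map_mul_of_coprime (Nat.Coprime.pow 2 2 hmn)⟩

noncomputable def extendSq [Zero R] (f : ArithmeticFunction R) : ArithmeticFunction R :=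
  ⟨Function.extend (· ^ 2) f 0, by
    simpa using (Nat.pow_left_injective two_ne_zero).extend_apply f 0 0⟩

@[simp]
theorem extendSq_apply_sq [Zero R] (f : ArithmeticFunction R) (n : ℕ) :
    extendSq f (n ^ 2) = f n :=
  (Nat.pow_left_injective two_ne_zero).extend_apply f 0 n

theorem extendSq_apply_of_forall_ne [Zero R] (f : ArithmeticFunction R) {n : ℕ}
    (hn : ∀ r, r ^ 2 ≠ n) : extendSq f n = 0 :=
  Function.extend_apply' _ _ _ fun ⟨r, hr⟩ => hn r hr

theorem IsMultiplicative.extendSq [MonoidWithZero R] {f : ArithmeticFunction R}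
    (hf : f.IsMultiplicative) : (extendSq f).IsMultiplicative := by
  refine ⟨by simpa using (extendSq_apply_sq f 1).trans hf.map_one, fun {m n} hmn => ?_⟩
  by_cases hsq : (∃ r, r ^ 2 = m) ∧ ∃ t, t ^ 2 = n
  · obtain ⟨⟨r, rfl⟩, ⟨t, rfl⟩⟩ := hsq
    rw [← mul_pow, extendSq_apply_sq, extendSq_apply_sq, extendSq_apply_sq]
    exact hf.map_mul_of_coprime <|
      (Nat.coprime_pow_left_iff two_pos _ _).mp ((Nat.coprime_pow_right_iff two_pos _ _).mp hmn)
  · have hmn_sq : ∀ k, k ^ 2 ≠ m * n := fun k hk =>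
      hsq ⟨hmn.exists_sq_left_of_mul_eq_sq hk.symm,
        hmn.symm.exists_sq_left_of_mul_eq_sq (by rw [mul_comm, hk])⟩
    rw [extendSq_apply_of_forall_ne f hmn_sq]
    rcases not_and_or.mp hsq with hm | hn
    · rw [extendSq_apply_of_forall_ne f (not_exists.mp hm), zero_mul]
    · rw [extendSq_apply_of_forall_ne f (not_exists.mp hn), mul_zero]

theorem bellSeries_extendSq [CommRing R] (f : ArithmeticFunction R) {p : ℕ} (hp : p.Prime) :
    bellSeries p (extendSq f) = expand 2 two_ne_zero (bellSeries p f) := by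
  ext e
  rw [coeff_expand, coeff_bellSeries]
  split_ifs with he
  · obtain ⟨k, rfl⟩ := he
    rw [coeff_bellSeries, pow_mul', extendSq_apply_sq, Nat.mul_div_cancel_left k two_pos]
  · exact extendSq_apply_of_forall_ne f (hp.sq_ne_pow he)

open LSeries in
theorem term_extendSq_sq (f : ArithmeticFunction ℂ) (s : ℂ) (n : ℕ) :
    term (extendSq f) s (n ^ 2) = term f (2 * s) n := by
  rcases eq_or_ne n 0 with rfl | hn
  · simp
  rw [term_of_ne_zero (pow_ne_zero 2 hn), term_of_ne_zero hn, extendSq_apply_sq,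
    Nat.cast_pow, ← Complex.natCast_cpow_natCast_mul, Nat.cast_ofNat]

open LSeries in
theorem term_extendSq_of_not_mem_range (f : ArithmeticFunction ℂ) (s : ℂ) (m : ℕ)
    (hm : m ∉ Set.range (· ^ 2 : ℕ → ℕ)) : term (extendSq f) s m = 0 := by
  rcases eq_or_ne m 0 with rfl | hm0
  · exact term_zero ..
  rw [term_of_ne_zero hm0, extendSq_apply_of_forall_ne f fun r hr => hm ⟨r, hr⟩, zero_div]

theorem LSeriesHasSum_extendSq_iff (f : ArithmeticFunction ℂ) (s a : ℂ) :
    LSeriesHasSum (extendSq f) s a ↔ LSeriesHasSum f (2 * s) a := by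
  rw [LSeriesHasSum, LSeriesHasSum,
    ← (Nat.pow_left_injective two_ne_zero).hasSum_iff (term_extendSq_of_not_mem_range f s)]
  exact Iff.of_eq (congrArg (HasSum · a) (funext (term_extendSq_sq f s)))

end Squares

end ArithmeticFunction

namespace DirichletCharacter

open ArithmeticFunction

variable {N : ℕ}

theorem toArithmeticFunction_apply_pow {R : Type*} [CommMonoidWithZero R]
    (ψ : DirichletCharacter R N) {p : ℕ} (hp : p ≠ 0) (e : ℕ) :
    toArithmeticFunction (ψ ·) (p ^ e) = ψ p ^ e := by
  simp [toArithmeticFunction, hp]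

section CommRing

variable {R : Type*} [CommRing R]

theorem bellSeries_toArithmeticFunction (ψ : DirichletCharacter R N) {p : ℕ} (hp : p ≠ 0) :
    bellSeries p (toArithmeticFunction (ψ ·)) = rescale (ψ p) (mk 1) := by
  ext e
  simp [toArithmeticFunction_apply_pow ψ hp]

theorem bellSeries_toArithmeticFunction_pmul (ψ : DirichletCharacter R N) {p : ℕ} (hp : p ≠ 0)
    (f : ArithmeticFunction R) :
    bellSeries p ((toArithmeticFunction (ψ ·)).pmul f) = rescale (ψ p) (bellSeries p f) := by
  ext e
  simp [toArithmeticFunction_apply_pow ψ hp]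

theorem bellSeries_compSq_zeta_mul (ψ : DirichletCharacter R N) {p : ℕ} (hp : p.Prime) :
    bellSeries p (compSq ((ζ : ArithmeticFunction R) * toArithmeticFunction (ψ ·))) =
      mk fun e => ∑ i ∈ range (2 * e + 1), ψ p ^ i := by
  ext e
  rw [coeff_bellSeries, compSq_apply, coe_zeta_mul_apply, ← pow_mul',
    Nat.sum_divisors_prime_pow hp, coeff_mk]
  exact sum_congr rfl fun i _ => toArithmeticFunction_apply_pow ψ hp.ne_zero i

theorem inv_pmul_compSq_zeta_mul_eq (χ : DirichletCharacter R N) :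
    (toArithmeticFunction (χ⁻¹ ·)).pmul
        (compSq ((ζ : ArithmeticFunction R) * toArithmeticFunction (χ ·))) =
      toArithmeticFunction ((1 : DirichletCharacter R N) ·) * toArithmeticFunction (χ ·) *
        toArithmeticFunction (χ⁻¹ ·) *
          extendSq ((toArithmeticFunction ((1 : DirichletCharacter R N) ·)).pmul μ) := by
  refine IsMultiplicative.eq_of_bellSeries_eq ?_ ?_ fun p hp => ?_
  · exact (isMultiplicative_toArithmeticFunction _).pmul
      (isMultiplicative_zeta.natCast.mul (isMultiplicative_toArithmeticFunction χ)).compSq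
  · exact (((isMultiplicative_toArithmeticFunction _).mul
      (isMultiplicative_toArithmeticFunction _)).mul (isMultiplicative_toArithmeticFunction _)).mul
      ((isMultiplicative_toArithmeticFunction _).pmul isMultiplicative_moebius.intCast).extendSq
  simp only [bellSeries_mul _ _ hp, bellSeries_toArithmeticFunction_pmul _ hp.ne_zero,
    bellSeries_toArithmeticFunction _ hp.ne_zero, bellSeries_compSq_zeta_mul _ hp,
    bellSeries_extendSq _ hp, bellSeries_moebius hp]
  by_cases hu : IsUnit (p : ZMod N)
  · have hχ : χ p * χ⁻¹ p = 1 := by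
      rw [mul_comm, ← MulChar.mul_apply, MulChar.inv_mul, MulChar.one_apply hu]
    simpa [MulChar.one_apply hu] using rescale_mk_sum_range_eq hχ
  · simp [MulChar.map_nonunit _ hu]

theorem inv_pmul_compSq_zeta_mul_apply (χ : DirichletCharacter R N) {n : ℕ} (hn : n ≠ 0) :
    (toArithmeticFunction (χ⁻¹ ·)).pmul
        (compSq ((ζ : ArithmeticFunction R) * toArithmeticFunction (χ ·))) n =
      χ⁻¹ n * ∑ u ∈ (n ^ 2).divisors, χ u := by
  rw [pmul_apply, compSq_apply, coe_zeta_mul_apply, ← apply_eq_toArithmeticFunction_apply _ hn]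
  exact congrArg _ <| sum_congr rfl fun u hu =>
    (apply_eq_toArithmeticFunction_apply _ (Nat.pos_of_mem_divisors hu).ne').symm

end CommRing

theorem LSeriesHasSum_toArithmeticFunction (ψ : DirichletCharacter ℂ N) {s : ℂ}
    (hs : 1 < s.re) : LSeriesHasSum (toArithmeticFunction (ψ ·)) s (L ↗ψ s) :=
  (LSeriesHasSum_congr s _ fun hn => apply_eq_toArithmeticFunction_apply ψ hn).mp
    (LSeriesSummable_of_one_lt_re ψ hs).LSeriesHasSum

theorem LSeriesHasSum_extendSq_pmul_moebius (ψ : DirichletCharacter ℂ N) {s : ℂ}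
    (hs : 1 < (2 * s).re) :
    LSeriesHasSum (extendSq ((toArithmeticFunction (ψ ·)).pmul μ)) s (L ↗ψ (2 * s))⁻¹ := by
  rw [LSeriesHasSum_extendSq_iff, ← eq_inv_of_mul_eq_one_right (LSeries.mul_mu_eq_one ψ hs)]
  refine (LSeriesHasSum_congr _ _ fun hn => ?_).mp
    (LSeriesSummable_mul ψ (LSeriesSummable_moebius_iff.mpr hs)).LSeriesHasSum
  simp [pmul_apply, ← apply_eq_toArithmeticFunction_apply ψ hn]

end DirichletCharacter

open DirichletCharacter ArithmeticFunction

open Complex in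
theorem dirichlet_series_binary_egyptian_general (a : ℕ) (χ : DirichletCharacter ℂ a)
    (s : ℂ) (hs : 1 < s.re) :
    LSeries (fun n => (starRingEnd ℂ) (χ n) * ∑ u ∈ (n ^ 2).divisors, χ u) s =
      LSeries (fun n => (1 : DirichletCharacter ℂ a) n) s * LSeries (fun n => χ n) s *
        LSeries (fun n => (starRingEnd ℂ) (χ n)) s /
          LSeries (fun n => (1 : DirichletCharacter ℂ a) n) (2 * s) := by
  have h2s : 1 < (2 * s).re := by linarith [show (2 * s).re = 2 * s.re by simp]
  have hsum := LSeriesHasSum_mul (LSeriesHasSum_mul (LSeriesHasSum_mul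
    (LSeriesHasSum_toArithmeticFunction (1 : DirichletCharacter ℂ a) hs)
    (LSeriesHasSum_toArithmeticFunction χ hs)) (LSeriesHasSum_toArithmeticFunction χ⁻¹ hs))
    (LSeriesHasSum_extendSq_pmul_moebius (1 : DirichletCharacter ℂ a) h2s)
  rw [← inv_pmul_compSq_zeta_mul_eq] at hsum
  have hstar : ∀ n : ℕ, starRingEnd ℂ (χ n) = χ⁻¹ n := fun n => MulChar.star_apply' χ n
  simp only [hstar]
  rw [LSeries_congr (fun hn => (inv_pmul_compSq_zeta_mul_apply χ hn).symm) s, hsum.LSeries_eq,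
    div_eq_mul_inv]

open Complex in
/-- For `Re s > 1`, `Σ_{n ≥ 1} conj(χ)(n) (Σ_{u ∣ n²} χ(u)) / n^s
  = L(s, χ₀) L(s, χ) L(s, conj χ) / L(2s, χ₀)`. -/
theorem dirichlet_series_binary_egyptian (a : ℕ) [NeZero a] (χ : DirichletCharacter ℂ a)
    (s : ℂ) (hs : 1 < s.re) :
    LSeries (fun n => (starRingEnd ℂ) (χ n) * ∑ u ∈ (n ^ 2).divisors, χ u) s =
      LSeries (fun n => (1 : DirichletCharacter ℂ a) n) s * LSeries (fun n => χ n) s *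
        LSeries (fun n => (starRingEnd ℂ) (χ n)) s /
          LSeries (fun n => (1 : DirichletCharacter ℂ a) n) (2 * s) :=
  dirichlet_series_binary_egyptian_general a χ s hs
end

section
/- For a squarefree positive integer a (or any positive integer a), Σ_{q | a} φ(q) · Π_{p | (a/q)} (1 + p^{-1/2})⁴ ≤ C·a for an absolute constant C; more precisely this sum equals a·Π_{p|a}(1 + p^{-1}((1+p^{-1/2})⁴ - 1)) when a is squarefree, which is O(a). -/
/-!
Both sides of the identity are multiplicative in `a`, being the Dirichlet convolution of `φ` with
`n ↦ ∏_{p ∣ n} c p` (here `c p = (1 + p^{-1/2})⁴`) and `a ↦ a ∏_{p ∣ a} (1 + (c p - 1) / p)`;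
at `p^(m+1)` both equal `φ(p^(m+1)) + c p · p^m`, since `∑_{i ≤ m} φ(p^i) = p^m`. The identity
thus holds for every `a ≠ 0`. For the bound, `(c p - 1) / p ≤ 15 p^{-3/2}` is summable, so the
product is at most `exp (∑ₙ (c n - 1) / n)`.
-/

open Real Finset ArithmeticFunction

namespace ArithmeticFunction

def totient : ArithmeticFunction ℕ := ⟨Nat.totient, Nat.totient_zero⟩

@[simp]
theorem totient_apply (n : ℕ) : totient n = n.totient := rfl

theorem isMultiplicative_totient : totient.IsMultiplicative :=
  ⟨Nat.totient_one, Nat.totient_mul⟩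

theorem prodPrimeFactors_prime_pow {R : Type*} [CommMonoidWithZero R] (c : ℕ → R) {p k : ℕ}
    (hp : p.Prime) (hk : k ≠ 0) : prodPrimeFactors c (p ^ k) = c p := by
  rw [prodPrimeFactors_apply (pow_ne_zero _ hp.ne_zero), Nat.primeFactors_prime_pow hk hp,
    prod_singleton]

variable {K : Type*} [Field K] [CharZero K]

theorem totient_mul_prodPrimeFactors_prime_pow (c : ℕ → K) {p k : ℕ} (hp : p.Prime)
    (hk : k ≠ 0) :
    ((totient : ArithmeticFunction K) * prodPrimeFactors c) (p ^ k) =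
      p ^ k * (1 + (p : K)⁻¹ * (c p - 1)) := by
  obtain ⟨m, rfl⟩ := Nat.exists_eq_add_one_of_ne_zero hk
  have htail : ∀ i ∈ range (m + 1),
      (Nat.totient (p ^ i) : K) * prodPrimeFactors c (p ^ (m + 1) / p ^ i) =
        Nat.totient (p ^ i) * c p := fun i hi => by
    rw [Nat.pow_div (by simp at hi; omega) hp.pos,
      prodPrimeFactors_prime_pow c hp (by simp at hi; omega)]
  have hsum : ∑ i ∈ range (m + 1), (Nat.totient (p ^ i) : K) = p ^ m := by
    exact_mod_cast (Nat.sum_divisors_prime_pow hp).symm.trans (Nat.sum_totient (p ^ m))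
  rw [mul_apply, Nat.sum_divisorsAntidiagonal (f := fun x y => (totient : ArithmeticFunction K) x *
      prodPrimeFactors c y), Nat.sum_divisors_prime_pow hp, sum_range_succ]
  simp only [natCoe_apply, totient_apply]
  rw [sum_congr rfl htail, ← sum_mul, hsum, Nat.div_self (pow_pos hp.pos _),
    (IsMultiplicative.prodPrimeFactors c).map_one, Nat.totient_prime_pow_succ hp,
    Nat.cast_mul, Nat.cast_sub hp.one_le]
  have : (p : K) ≠ 0 := by exact_mod_cast hp.ne_zero
  field_simp
  push_cast
  ring

theorem sum_divisors_totient_mul_prod_primeFactors (c : ℕ → K) {a : ℕ} (ha : a ≠ 0) :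
    ∑ q ∈ a.divisors, (q.totient : K) * ∏ p ∈ (a / q).primeFactors, c p =
      a * ∏ p ∈ a.primeFactors, (1 + (p : K)⁻¹ * (c p - 1)) := by
  have hmul := isMultiplicative_totient.natCast.mul (IsMultiplicative.prodPrimeFactors (R := K) c)
  have key : (totient : ArithmeticFunction K) * prodPrimeFactors c =
      (ArithmeticFunction.id : ArithmeticFunction K).pmul
        (prodPrimeFactors fun p => 1 + (p : K)⁻¹ * (c p - 1)) := by
    rw [IsMultiplicative.eq_iff_eq_on_prime_powers _ hmul _
      (isMultiplicative_id.natCast.pmul (IsMultiplicative.prodPrimeFactors _))]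
    intro p k hp
    rcases eq_or_ne k 0 with rfl | hk
    · simp [hmul.map_one]
    rw [totient_mul_prodPrimeFactors_prime_pow c hp hk, pmul_apply, natCoe_apply, id_apply,
      prodPrimeFactors_prime_pow _ hp hk]
    push_cast
    rfl
  have := congrArg (· a) key
  simp only [mul_apply, pmul_apply, natCoe_apply, id_apply, prodPrimeFactors_apply ha] at this
  rw [← this,
    Nat.sum_divisorsAntidiagonal (f := fun x y => ((totient x : ℕ) : K) * prodPrimeFactors c y)]
  refine sum_congr rfl fun q hq => ?_
  have hq0 : a / q ≠ 0 := (Nat.div_ne_zero_iff_of_dvd (Nat.dvd_of_mem_divisors hq)).2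
    ⟨ha, (Nat.pos_of_mem_divisors hq).ne'⟩
  rw [totient_apply, prodPrimeFactors_apply hq0]

end ArithmeticFunction

theorem prod_one_add_le_exp_tsum {ι : Type*} (s : Finset ι) {f : ι → ℝ} (hf : ∀ i, 0 ≤ f i)
    (hsum : Summable f) : ∏ i ∈ s, (1 + f i) ≤ exp (∑' i, f i) :=
  (prod_one_add_le_exp_sum s hf).trans (exp_le_exp.2 (hsum.sum_le_tsum s fun i _ => hf i))

theorem one_add_pow_four_sub_one_le {x : ℝ} (hx0 : 0 ≤ x) (hx1 : x ≤ 1) :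
    (1 + x) ^ 4 - 1 ≤ 15 * x := by
  nlinarith [pow_le_one₀ hx0 hx1 (n := 2), pow_le_one₀ hx0 hx1 (n := 3)]

theorem inv_mul_one_add_rpow_pow_four_sub_one_nonneg (n : ℕ) :
    0 ≤ (n : ℝ)⁻¹ * ((1 + (n : ℝ) ^ (-(1 : ℝ) / 2)) ^ 4 - 1) := by
  have : 1 ≤ (1 + (n : ℝ) ^ (-(1 : ℝ) / 2)) ^ 4 :=
    one_le_pow₀ (le_add_of_nonneg_right (by positivity))
  exact mul_nonneg (by positivity) (sub_nonneg.2 this)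

theorem inv_mul_one_add_rpow_pow_four_sub_one_le (n : ℕ) :
    (n : ℝ)⁻¹ * ((1 + (n : ℝ) ^ (-(1 : ℝ) / 2)) ^ 4 - 1) ≤ 15 * (n : ℝ) ^ (-(3 : ℝ) / 2) := by
  rcases Nat.eq_zero_or_pos n with rfl | hn
  · simp
  have hn1 : (1 : ℝ) ≤ n := by exact_mod_cast hn
  have hn0 : (0 : ℝ) < n := by positivity
  calc (n : ℝ)⁻¹ * ((1 + (n : ℝ) ^ (-(1 : ℝ) / 2)) ^ 4 - 1)
      ≤ (n : ℝ) ^ (-1 : ℝ) * (15 * (n : ℝ) ^ (-(1 : ℝ) / 2)) := by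
        rw [rpow_neg_one]
        gcongr
        exact one_add_pow_four_sub_one_le (by positivity)
          (rpow_le_one_of_one_le_of_nonpos hn1 (by norm_num))
    _ = 15 * (n : ℝ) ^ (-(3 : ℝ) / 2) := by
        rw [mul_left_comm, ← rpow_add hn0]
        norm_num

theorem summable_inv_mul_one_add_rpow_pow_four_sub_one :
    Summable fun n : ℕ => (n : ℝ)⁻¹ * ((1 + (n : ℝ) ^ (-(1 : ℝ) / 2)) ^ 4 - 1) :=
  .of_nonneg_of_le inv_mul_one_add_rpow_pow_four_sub_one_nonneg
    inv_mul_one_add_rpow_pow_four_sub_one_le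
    ((summable_nat_rpow.2 (by norm_num)).mul_left 15)

open Real in
/-- `Σ_{q ∣ a} φ(q) Π_{p ∣ a/q} (1 + p^{-1/2})⁴ = O(a)`, and for squarefree `a` the sum
equals `a · Π_{p ∣ a} (1 + p⁻¹((1 + p^{-1/2})⁴ - 1))`. -/
theorem sum_totient_prod_bound :
    (∃ C : ℝ, 0 < C ∧ ∀ a : ℕ, 0 < a →
      ∑ q ∈ a.divisors, (Nat.totient q : ℝ) *
          ∏ p ∈ (a / q).primeFactors, (1 + (p : ℝ) ^ (-(1 : ℝ) / 2)) ^ 4 ≤ C * a) ∧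
    ∀ a : ℕ, Squarefree a →
      ∑ q ∈ a.divisors, (Nat.totient q : ℝ) *
          ∏ p ∈ (a / q).primeFactors, (1 + (p : ℝ) ^ (-(1 : ℝ) / 2)) ^ 4 =
        (a : ℝ) * ∏ p ∈ a.primeFactors,
          (1 + (p : ℝ)⁻¹ * ((1 + (p : ℝ) ^ (-(1 : ℝ) / 2)) ^ 4 - 1)) := by
  refine ⟨⟨exp (∑' n : ℕ, (n : ℝ)⁻¹ * ((1 + (n : ℝ) ^ (-(1 : ℝ) / 2)) ^ 4 - 1)), exp_pos _,
    fun a ha => ?_⟩, fun a ha => sum_divisors_totient_mul_prod_primeFactors _ ha.ne_zero⟩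
  rw [sum_divisors_totient_mul_prod_primeFactors _ ha.ne', mul_comm]
  gcongr
  exact prod_one_add_le_exp_tsum _ inv_mul_one_add_rpow_pow_four_sub_one_nonneg
    summable_inv_mul_one_add_rpow_pow_four_sub_one
end

section
/- For x ≥ 1 and a positive integer a, Σ_{n ≤ x, gcd(n,a)=1} 1/n = (φ(a)/a)·(log x + γ + Σ_{p|a} (log p)/(p-1)) + O(d(a)/x), where γ is the Euler–Mascheroni constant. -/
/-!
Möbius inversion over the divisors of `a` removes the coprimality condition:
`∑_{n ≤ x, (n,a)=1} 1/n = ∑_{d ∣ a} μ(d)/d · H(⌊x/d⌋)`. Since `H(⌊y⌋) = log y + γ + O(1/y)` for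
every `y > 0`, each of the `d(a)` divisors contributes an error `O(1/x)`. In the main term
`∑_{d ∣ a} μ(d)/d · (log x - log d + γ)` only squarefree `d`, i.e. sets of primes dividing `a`,
contribute: this gives `∑ μ(d)/d = ∏_{p ∣ a} (1 - 1/p) = φ(a)/a`, and `-∑ μ(d) log d/d` is the
derivative of `∏_{p ∣ a} (1 - p^{-s})` at `s = 1`, computed by the product rule on subsets.
-/

open Finset Real
open scoped ArithmeticFunction.Moebius Nat

lemma Real.log_add_one_sub_log_le_inv {y : ℝ} (hy : 0 < y) : log (y + 1) - log y ≤ y⁻¹ := by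
  rw [← log_div (by positivity) hy.ne']
  calc log ((y + 1) / y) ≤ (y + 1) / y - 1 := log_le_sub_one_of_pos (by positivity)
    _ = y⁻¹ := by field_simp; ring

lemma abs_harmonic_floor_sub_log_sub_eulerMascheroniConstant_le {y : ℝ} (hy : 0 < y) :
    |(harmonic ⌊y⌋₊ : ℝ) - (log y + eulerMascheroniConstant)| ≤ 2 / y := by
  have hγ₀ : 0 < eulerMascheroniConstant :=
    eulerMascheroniSeq_zero ▸ eulerMascheroniSeq_lt_eulerMascheroniConstant 0
  rcases lt_or_ge y 1 with hy1 | hy1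
  · have hlog : -log y ≤ y⁻¹ - 1 := by
      rw [← log_inv]; exact log_le_sub_one_of_pos (by positivity)
    have hinv : 1 < y⁻¹ := one_lt_inv_iff₀.mpr ⟨hy, hy1⟩
    rw [Nat.floor_eq_zero.mpr hy1, harmonic_zero, Rat.cast_zero, zero_sub, abs_neg, abs_le,
      div_eq_mul_inv]
    have := log_neg hy hy1
    have := eulerMascheroniConstant_lt_two_thirds
    constructor <;> linarith
  · set N := ⌊y⌋₊
    have hN₁ : 1 ≤ N := Nat.floor_pos.mpr hy1
    have hN : (1 : ℝ) ≤ N := by exact_mod_cast hN₁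
    have hNy : (N : ℝ) ≤ y := Nat.floor_le hy.le
    have hyN : y < N + 1 := Nat.lt_floor_add_one y
    have hlower : log N < harmonic N - eulerMascheroniConstant := by
      have := eulerMascheroniConstant_lt_eulerMascheroniSeq' N
      rw [eulerMascheroniSeq', if_neg (by omega)] at this
      linarith
    have hupper : harmonic N - eulerMascheroniConstant < log (N + 1) := by
      have := eulerMascheroniSeq_lt_eulerMascheroniConstant N
      rw [eulerMascheroniSeq] at this
      linarith
    have hlogy₁ : log N ≤ log y := log_le_log (by positivity) hNy
    have hlogy₂ : log y ≤ log (N + 1) := log_le_log hy hyN.le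
    have hgap : log (N + 1) - log N ≤ 2 / y := by
      refine (log_add_one_sub_log_le_inv (by positivity)).trans ?_
      rw [inv_eq_one_div, div_le_div_iff₀ (by positivity) hy]
      linarith
    rw [abs_le]
    constructor <;> linarith

lemma Nat.divisors_gcd {m n : ℕ} (hn : n ≠ 0) :
    (m.gcd n).divisors = {d ∈ n.divisors | d ∣ m} := by
  ext d
  simp only [Nat.mem_divisors, mem_filter, Nat.dvd_gcd_iff, ne_eq, Nat.gcd_eq_zero_iff, hn,
    and_false, not_false_eq_true, and_true]
  tauto

lemma ArithmeticFunction.sum_divisors_gcd_moebius {R : Type*} [Ring R] (m n : ℕ) :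
    ∑ d ∈ (m.gcd n).divisors, (μ d : R) = if m.gcd n = 1 then 1 else 0 := by
  have h := coe_mul_zeta_apply (f := (μ : ArithmeticFunction R)) (x := m.gcd n)
  rw [coe_moebius_mul_coe_zeta, one_apply] at h
  simpa only [intCoe_apply] using h.symm

lemma ArithmeticFunction.sum_ite_coprime_eq_sum_divisors_moebius {R : Type*} [CommRing R]
    {a : ℕ} (ha : a ≠ 0) (s : Finset ℕ) (f : ℕ → R) :
    ∑ n ∈ s, (if n.gcd a = 1 then f n else 0) =
      ∑ d ∈ a.divisors, μ d * ∑ n ∈ s with d ∣ n, f n := by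
  have hsieve (n : ℕ) :
      (if n.gcd a = 1 then f n else 0) = ∑ d ∈ a.divisors with d ∣ n, μ d * f n := by
    rw [← sum_mul, ← Nat.divisors_gcd ha, sum_divisors_gcd_moebius, ite_mul, one_mul, zero_mul]
  simp_rw [hsieve, mul_sum, sum_filter]
  exact sum_comm

lemma sum_Icc_filter_dvd_inv {d : ℕ} (hd : 0 < d) (N : ℕ) :
    ∑ n ∈ Icc 1 N with d ∣ n, (n : ℝ)⁻¹ = (d : ℝ)⁻¹ * harmonic (N / d) := by
  rw [harmonic_eq_sum_Icc, Rat.cast_sum, mul_sum]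
  symm
  refine sum_nbij' (fun m => d * m) (fun n => n / d) ?_ ?_ ?_ ?_ ?_ <;>
    simp only [mem_filter, mem_Icc]
  · rintro m ⟨hm₁, hm₂⟩
    have := (Nat.le_div_iff_mul_le hd).mp hm₂
    exact ⟨⟨Nat.one_le_iff_ne_zero.mpr (by positivity), by linarith⟩, dvd_mul_right d m⟩
  · rintro n ⟨⟨hn₁, hn₂⟩, k, rfl⟩
    rw [Nat.mul_div_cancel_left k hd]
    exact ⟨Nat.pos_of_mul_pos_left hn₁, (Nat.le_div_iff_mul_le hd).mpr (by linarith)⟩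
  · intro m _
    exact Nat.mul_div_cancel_left m hd
  · rintro n ⟨_, hdn⟩
    exact Nat.mul_div_cancel' hdn
  · intro m _
    rw [Nat.cast_mul, mul_inv, Rat.cast_inv, Rat.cast_natCast]

lemma sum_Icc_coprime_inv_eq_sum_divisors_moebius {a : ℕ} (ha : a ≠ 0) (N : ℕ) :
    ∑ n ∈ Icc 1 N, (if n.gcd a = 1 then (n : ℝ)⁻¹ else 0) =
      ∑ d ∈ a.divisors, (μ d : ℝ) / d * harmonic (N / d) := by
  rw [ArithmeticFunction.sum_ite_coprime_eq_sum_divisors_moebius ha]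
  refine sum_congr rfl fun d hd => ?_
  rw [sum_Icc_filter_dvd_inv (Nat.pos_of_mem_divisors hd), div_eq_mul_inv, mul_assoc]

lemma ArithmeticFunction.moebius_prod_primes {t : Finset ℕ} (ht : ∀ p ∈ t, p.Prime) :
    μ (∏ p ∈ t, p) = (-1) ^ #t := by
  rw [isMultiplicative_moebius.map_prod_of_prime t ht,
    prod_congr rfl fun p hp => moebius_apply_prime (ht p hp), prod_const]

lemma ArithmeticFunction.sum_divisors_moebius_mul_eq_sum_powerset {R : Type*} [CommRing R]
    {n : ℕ} (hn : n ≠ 0) (f : ℕ → R) :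
    ∑ d ∈ n.divisors, μ d * f d = ∑ t ∈ n.primeFactors.powerset, (-1) ^ #t * f (∏ p ∈ t, p) := by
  rw [← sum_filter_of_ne (p := Squarefree) fun d _ hd => by
      by_contra hsq
      simp [moebius_eq_zero_of_not_squarefree hsq] at hd,
    Nat.sum_divisors_filter_squarefree hn, Nat.factors_eq]
  refine sum_congr rfl fun t ht => ?_
  have hprime p (hp : p ∈ t) : p.Prime := Nat.prime_of_mem_primeFactors (mem_powerset.mp ht hp)
  rw [show t.val.prod = ∏ p ∈ t, p from t.prod_val, moebius_prod_primes hprime]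
  push_cast
  rfl

lemma Finset.sum_powerset_prod_mul_sum {ι R : Type*} [DecidableEq ι] [CommSemiring R]
    (s : Finset ι) (r c : ι → R) :
    ∑ t ∈ s.powerset, (∏ i ∈ t, r i) * ∑ i ∈ t, c i =
      ∑ i ∈ s, c i * r i * ∏ j ∈ s.erase i, (1 + r j) := by
  induction s using Finset.induction_on with
  | empty => simp
  | @insert a s ha ih =>
    have hinsert (t) (ht : t ∈ s.powerset) :
        (∏ i ∈ insert a t, r i) * ∑ i ∈ insert a t, c i =
          r a * ((∏ i ∈ t, r i) * ∑ i ∈ t, c i) + c a * r a * ∏ i ∈ t, r i := by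
      have hat : a ∉ t := fun h => ha (mem_powerset.mp ht h)
      rw [prod_insert hat, sum_insert hat]
      ring
    have hrhs : ∑ i ∈ s, c i * r i * ∏ j ∈ (insert a s).erase i, (1 + r j) =
        (1 + r a) * ∑ i ∈ s, c i * r i * ∏ j ∈ s.erase i, (1 + r j) := by
      rw [mul_sum]
      refine sum_congr rfl fun i hi => ?_
      rw [erase_insert_of_ne (ne_of_mem_of_not_mem hi ha).symm,
        prod_insert fun h => ha (mem_of_mem_erase h)]
      ring
    rw [sum_powerset_insert ha, sum_congr rfl hinsert, sum_add_distrib, ← mul_sum, ← mul_sum,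
      ← prod_one_add, ih, sum_insert ha, erase_insert ha, hrhs]
    ring

lemma Nat.totient_div_self_eq_prod_one_sub_inv {n : ℕ} (hn : n ≠ 0) :
    (φ n : ℝ) / n = ∏ p ∈ n.primeFactors, (1 - (p : ℝ)⁻¹) := by
  have h := congrArg ((↑) : ℚ → ℝ) (Nat.totient_eq_mul_prod_factors n)
  push_cast at h
  rw [h, mul_div_cancel_left₀ _ (by exact_mod_cast hn)]

lemma ArithmeticFunction.sum_divisors_moebius_div {n : ℕ} (hn : n ≠ 0) :
    ∑ d ∈ n.divisors, (μ d : ℝ) / d = φ n / n := by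
  simp_rw [div_eq_mul_inv (μ _ : ℝ)]
  rw [sum_divisors_moebius_mul_eq_sum_powerset hn, Nat.totient_div_self_eq_prod_one_sub_inv hn]
  simp_rw [sub_eq_add_neg (1 : ℝ), prod_one_add, prod_neg, Nat.cast_prod, prod_inv_distrib]

lemma ArithmeticFunction.sum_divisors_moebius_mul_log_div {n : ℕ} (hn : n ≠ 0) :
    ∑ d ∈ n.divisors, (μ d : ℝ) * Real.log d / d =
      -(φ n / n * ∑ p ∈ n.primeFactors, Real.log p / (p - 1)) := by
  simp_rw [mul_div_assoc]
  rw [sum_divisors_moebius_mul_eq_sum_powerset hn]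
  have hterm (t) (ht : t ∈ n.primeFactors.powerset) :
      (-1) ^ #t * (Real.log (∏ p ∈ t, p : ℕ) / (∏ p ∈ t, p : ℕ)) =
        (∏ p ∈ t, -(p : ℝ)⁻¹) * ∑ p ∈ t, Real.log p := by
    have hpos p (hp : p ∈ t) : (p : ℝ) ≠ 0 :=
      Nat.cast_ne_zero.mpr (Nat.prime_of_mem_primeFactors (mem_powerset.mp ht hp)).ne_zero
    push_cast
    rw [prod_neg, log_prod hpos, prod_inv_distrib]
    ring
  rw [sum_congr rfl hterm, sum_powerset_prod_mul_sum, mul_sum, ← sum_neg_distrib]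
  refine sum_congr rfl fun p hp => ?_
  have hp₂ : (2 : ℝ) ≤ p := by exact_mod_cast (Nat.prime_of_mem_primeFactors hp).two_le
  have hp₀ : (p : ℝ) ≠ 0 := by positivity
  have hp₁ : (p : ℝ) - 1 ≠ 0 := by linarith
  rw [Nat.totient_div_self_eq_prod_one_sub_inv hn, ← mul_prod_erase _ _ hp]
  simp_rw [← sub_eq_add_neg]
  field_simp

lemma sum_divisors_moebius_div_mul_log_div_add {n : ℕ} (hn : n ≠ 0) {x : ℝ} (hx : 0 < x)
    (c : ℝ) :
    ∑ d ∈ n.divisors, (μ d : ℝ) / d * (log (x / d) + c) =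
      φ n / n * (log x + c + ∑ p ∈ n.primeFactors, log p / (p - 1)) := by
  have hsplit (d) (hd : d ∈ n.divisors) :
      (μ d : ℝ) / d * (log (x / d) + c) = (μ d : ℝ) / d * (log x + c) - μ d * log d / d := by
    rw [log_div hx.ne' (Nat.cast_ne_zero.mpr (Nat.pos_of_mem_divisors hd).ne')]
    ring
  rw [sum_congr rfl hsplit, sum_sub_distrib, ← sum_mul,
    ArithmeticFunction.sum_divisors_moebius_div hn,
    ArithmeticFunction.sum_divisors_moebius_mul_log_div hn]
  ring

lemma abs_moebius_div_mul_harmonic_floor_sub_le {d : ℕ} (hd : 0 < d) {x : ℝ} (hx : 0 < x) :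
    |(μ d : ℝ) / d * harmonic ⌊x / d⌋₊ - μ d / d * (log (x / d) + eulerMascheroniConstant)| ≤
      2 / x := by
  have hd' : (0 : ℝ) < d := by exact_mod_cast hd
  have hμ : |(μ d : ℝ)| ≤ 1 := by exact_mod_cast ArithmeticFunction.abs_moebius_le_one
  rw [← mul_sub, abs_mul, abs_div, Nat.abs_cast]
  calc |(μ d : ℝ)| / d * |(harmonic ⌊x / d⌋₊ : ℝ) - (log (x / d) + eulerMascheroniConstant)|
      ≤ 1 / d * (2 / (x / d)) := by
        gcongr
        exact abs_harmonic_floor_sub_log_sub_eulerMascheroniConstant_le (by positivity)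
    _ = 2 / x := by field_simp

open Real in
/-- `Σ_{n ≤ x, (n,a)=1} 1/n = (φ(a)/a)(log x + γ + Σ_{p ∣ a} log p/(p-1)) + O(d(a)/x)`. -/
theorem sum_reciprocal_coprime :
    ∃ C : ℝ, 0 < C ∧ ∀ a : ℕ, 0 < a → ∀ x : ℝ, 1 ≤ x →
      |(∑ n ∈ Finset.Icc 1 ⌊x⌋₊, if Nat.gcd n a = 1 then (n : ℝ)⁻¹ else 0) -
        (Nat.totient a : ℝ) / a *
          (Real.log x + eulerMascheroniConstant +
            ∑ p ∈ a.primeFactors, Real.log p / ((p : ℝ) - 1))| ≤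
        C * a.divisors.card / x := by
  refine ⟨2, two_pos, fun a ha x hx => ?_⟩
  have hx₀ : 0 < x := by linarith
  rw [sum_Icc_coprime_inv_eq_sum_divisors_moebius ha.ne',
    ← sum_divisors_moebius_div_mul_log_div_add ha.ne' hx₀, ← sum_sub_distrib]
  calc _ ≤ ∑ d ∈ a.divisors, |(μ d : ℝ) / d * harmonic (⌊x⌋₊ / d) -
        μ d / d * (log (x / d) + eulerMascheroniConstant)| := abs_sum_le_sum_abs _ _
    _ ≤ ∑ d ∈ a.divisors, 2 / x := sum_le_sum fun d hd => by
        rw [← Nat.floor_div_natCast]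
        exact abs_moebius_div_mul_harmonic_floor_sub_le (Nat.pos_of_mem_divisors hd) hx₀
    _ = 2 * a.divisors.card / x := by rw [sum_const, nsmul_eq_mul]; ring
end

section
/- For a positive integer a, Σ_{p|a} ((3p+1)/(p-1)²)·log p = O(log log(3a)); i.e., there is an absolute constant C with Σ_{p|a} ((3p+1)/(p-1)²)·log p ≤ C·log log(3a). -/
/-!
Each term is at most `14 log p / p`. Split the primes dividing `a` at `L = log 3a`.
Those above `L` contribute at most `(∑_{p ∣ a} log p) / L ≤ log a / L ≤ 1`. Those below `L`
contribute at most `∑_{p ≤ L} log p / p`, which is `O(log L)`: on each of the `O(log L)`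
dyadic blocks `[2^j, 2^(j+1))` Chebyshev's bound `θ(x) ≤ x log 4` makes the sum at most
`2 log 4`.
-/

open Finset Real Chebyshev
open ArithmeticFunction hiding log

lemma three_mul_add_one_div_sub_one_sq_le {x : ℝ} (hx : 2 ≤ x) :
    (3 * x + 1) / (x - 1) ^ 2 ≤ 14 / x := by
  rw [div_le_div_iff₀ (by nlinarith) (by linarith)]
  nlinarith

lemma sum_primeFactors_weight_mul_log_le (a : ℕ) :
    ∑ p ∈ a.primeFactors, (3 * (p : ℝ) + 1) / ((p : ℝ) - 1) ^ 2 * log p ≤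
      14 * ∑ p ∈ a.primeFactors, log p / p := by
  rw [mul_sum]
  refine sum_le_sum fun p hp => ?_
  have hp2 : (2 : ℝ) ≤ p := by exact_mod_cast (Nat.prime_of_mem_primeFactors hp).two_le
  calc (3 * (p : ℝ) + 1) / ((p : ℝ) - 1) ^ 2 * log p ≤ 14 / p * log p :=
        mul_le_mul_of_nonneg_right (three_mul_add_one_div_sub_one_sq_le hp2)
          (log_natCast_nonneg p)
    _ = 14 * (log p / p) := by ring

lemma sum_primeFactors_log_le_log (a : ℕ) : ∑ p ∈ a.primeFactors, log p ≤ log a := by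
  rw [← vonMangoldt_sum]
  calc ∑ p ∈ a.primeFactors, log p = ∑ p ∈ a.primeFactors, Λ p :=
        sum_congr rfl fun p hp =>
          (vonMangoldt_apply_prime (Nat.prime_of_mem_primeFactors hp)).symm
    _ ≤ ∑ d ∈ a.divisors, Λ d :=
        sum_le_sum_of_subset_of_nonneg
          (fun p hp => Nat.mem_divisors.mpr (Nat.mem_primeFactors.mp hp).2)
          fun _ _ _ => vonMangoldt_nonneg

lemma sum_primeFactors_filter_lt_log_div_le (a : ℕ) {x : ℝ} (hx : 0 < x) :
    ∑ p ∈ a.primeFactors with x < (p : ℕ), log p / p ≤ log a / x := by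
  calc ∑ p ∈ a.primeFactors with x < (p : ℕ), log p / p
      ≤ ∑ p ∈ a.primeFactors with x < (p : ℕ), log p / x :=
        sum_le_sum fun p hp =>
          div_le_div_of_nonneg_left (log_natCast_nonneg p) hx (mem_filter.mp hp).2.le
    _ ≤ ∑ p ∈ a.primeFactors, log p / x :=
        sum_le_sum_of_subset_of_nonneg (filter_subset _ _)
          fun p _ _ => div_nonneg (log_natCast_nonneg p) hx.le
    _ ≤ log a / x := by
        rw [← sum_div]
        gcongr
        exact sum_primeFactors_log_le_log a

-- Chebyshev's bound `θ(2^(j+1)) ≤ 2^(j+1) log 4`, divided by `p ≥ 2^j`.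
lemma sum_log_div_le_of_log_two_eq {s : Finset ℕ} {j : ℕ}
    (hs : ∀ p ∈ s, p.Prime ∧ Nat.log 2 p = j) :
    ∑ p ∈ s, log p / p ≤ 2 * log 4 := by
  have hlow : ∀ p ∈ s, (2 : ℝ) ^ j ≤ p := fun p hp => by
    obtain ⟨hprime, rfl⟩ := hs p hp
    exact_mod_cast Nat.pow_log_le_self 2 hprime.ne_zero
  have hsub : s ⊆ Nat.primesLE (2 ^ (j + 1)) := fun p hp => by
    obtain ⟨hprime, rfl⟩ := hs p hp
    exact Nat.mem_primesLE.mpr ⟨(Nat.lt_pow_succ_log_self one_lt_two p).le, hprime⟩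
  have htheta : ∑ p ∈ s, log p ≤ θ (2 ^ (j + 1) : ℕ) := by
    rw [theta_eq_sum_primesLE_log]
    exact sum_le_sum_of_subset_of_nonneg hsub fun p _ _ => log_natCast_nonneg p
  calc ∑ p ∈ s, log p / p ≤ ∑ p ∈ s, log p / 2 ^ j :=
        sum_le_sum fun p hp =>
          div_le_div_of_nonneg_left (log_natCast_nonneg p) (by positivity) (hlow p hp)
    _ = (∑ p ∈ s, log p) / 2 ^ j := (sum_div ..).symm
    _ ≤ log 4 * 2 ^ (j + 1) / 2 ^ j := by
        gcongr
        exact_mod_cast htheta.trans (theta_le_log4_mul_x (Nat.cast_nonneg _))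
    _ = 2 * log 4 := by
        field_simp
        ring

lemma sum_primesLE_log_div_le (n : ℕ) :
    ∑ p ∈ Nat.primesLE n, log p / p ≤ 4 * log n + 4 * log 2 := by
  have hmaps : ∀ p ∈ Nat.primesLE n, Nat.log 2 p ∈ range (Nat.log 2 n + 1) := fun p hp =>
    mem_range_succ_iff.mpr (Nat.log_mono_right (Nat.mem_primesLE.mp hp).1)
  have hlog : (Nat.log 2 n : ℝ) * log 2 ≤ log n := by
    have := natLog_le_logb n 2
    rwa [Nat.cast_ofNat, logb, le_div_iff₀ (log_pos one_lt_two)] at this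
  have hlog4 : log 4 = 2 * log 2 := by
    rw [show (4 : ℝ) = 2 ^ 2 by norm_num, Real.log_pow, Nat.cast_ofNat]
  calc ∑ p ∈ Nat.primesLE n, log p / p
      = ∑ j ∈ range (Nat.log 2 n + 1),
          ∑ p ∈ Nat.primesLE n with Nat.log 2 p = j, log p / p :=
        (sum_fiberwise_of_maps_to hmaps _).symm
    _ ≤ ∑ j ∈ range (Nat.log 2 n + 1), 2 * log 4 :=
        sum_le_sum fun j _ => sum_log_div_le_of_log_two_eq fun p hp =>
          ⟨(Nat.mem_primesLE.mp (mem_filter.mp hp).1).2, (mem_filter.mp hp).2⟩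
    _ = 4 * ((Nat.log 2 n : ℝ) * log 2) + 4 * log 2 := by
        rw [sum_const, card_range, nsmul_eq_mul, hlog4]
        push_cast
        ring
    _ ≤ 4 * log n + 4 * log 2 := by linarith

lemma sum_log_div_le_of_forall_le {s : Finset ℕ} {x : ℝ} (hx : 1 ≤ x)
    (hs : ∀ p ∈ s, p.Prime ∧ (p : ℝ) ≤ x) :
    ∑ p ∈ s, log p / p ≤ 4 * log x + 4 * log 2 := by
  have hsub : s ⊆ Nat.primesLE ⌊x⌋₊ := fun p hp =>
    Nat.mem_primesLE.mpr ⟨Nat.le_floor (hs p hp).2, (hs p hp).1⟩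
  have hfloor : log ⌊x⌋₊ ≤ log x := by
    rcases Nat.eq_zero_or_pos ⌊x⌋₊ with h | h
    · rw [h, Nat.cast_zero, log_zero]
      exact log_nonneg hx
    · exact log_le_log (by exact_mod_cast h) (Nat.floor_le (by linarith))
  calc ∑ p ∈ s, log p / p ≤ ∑ p ∈ Nat.primesLE ⌊x⌋₊, log p / p :=
        sum_le_sum_of_subset_of_nonneg hsub
          fun p _ _ => div_nonneg (log_natCast_nonneg p) p.cast_nonneg
    _ ≤ 4 * log x + 4 * log 2 := by linarith [sum_primesLE_log_div_le ⌊x⌋₊]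

/-- `Σ_{p ∣ a} ((3p+1)/(p-1)²) log p = O(log log (3a))`. -/
theorem sum_over_prime_factors_loglog :
    ∃ C : ℝ, 0 < C ∧ ∀ a : ℕ, 0 < a →
      ∑ p ∈ a.primeFactors, (3 * (p : ℝ) + 1) / ((p : ℝ) - 1) ^ 2 * Real.log p ≤
        C * Real.log (Real.log (3 * a)) := by
  refine ⟨1000, by norm_num, fun a ha => ?_⟩
  set L := log (3 * a)
  have ha1 : (1 : ℝ) ≤ a := by exact_mod_cast ha
  have hL3 : log 3 ≤ L := log_le_log (by norm_num) (by linarith)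
  have hL1 : 1.0986 ≤ L := by linarith [log_three_gt_d9]
  have hloglog : 1 / 12 ≤ log L := by
    have := one_sub_inv_le_log_of_pos (by linarith : 0 < L)
    have : L⁻¹ ≤ 1.0986⁻¹ := inv_anti₀ (by norm_num) hL1
    linarith [show (1.0986 : ℝ)⁻¹ ≤ 11 / 12 by norm_num]
  have head : ∑ p ∈ a.primeFactors with (p : ℕ) ≤ L, log p / p ≤ 4 * log L + 4 * log 2 :=
    sum_log_div_le_of_forall_le (by linarith) fun p hp =>
      ⟨Nat.prime_of_mem_primeFactors (mem_filter.mp hp).1, (mem_filter.mp hp).2⟩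
  have tail : ∑ p ∈ a.primeFactors with ¬(p : ℕ) ≤ L, log p / p ≤ 1 := by
    simp_rw [not_le]
    calc _ ≤ log a / L := sum_primeFactors_filter_lt_log_div_le a (by linarith)
      _ ≤ 1 := (div_le_one (by linarith)).mpr (log_le_log (by linarith) (by linarith))
  calc _ ≤ 14 * ∑ p ∈ a.primeFactors, log p / p := sum_primeFactors_weight_mul_log_le a
    _ = 14 * (∑ p ∈ a.primeFactors with (p : ℕ) ≤ L, log p / p
          + ∑ p ∈ a.primeFactors with ¬(p : ℕ) ≤ L, log p / p) := by
        rw [sum_filter_add_sum_filter_not]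
    _ ≤ 1000 * log L := by linarith [log_two_lt_d9]
end
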